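/- For every positive integer n, r_{3,2}(n) = d(n² + 1)/2 - 1. -/

import Mathlib

/-- The `c`-th `m`-gonal number: `P(m,c) = c((m-2)c - (m-4))/2`. -/
def polygonal (m c : ℤ) : ℤ := c * ((m - 2) * c - (m - 4)) / 2

/-- `r_{m,t}(n)`: the number of unordered pairs `{a,b}` of positive integers with
`a + b = n` such that `ab = t·P(m,c)` for some `c`, where `c` ranges over positive
integers if `m = 3` or `m = 4`, and over all integers if `m > 4`. -/
noncomputable def rmt (m t n : ℕ) : ℕ :=
  Set.ncard {p : ℕ × ℕ | 0 < p.1 ∧ p.1 ≤ p.2 ∧ p.1 + p.2 = n ∧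
    ∃ c : ℤ, ((m = 3 ∨ m = 4) → 0 < c) ∧ (p.1 : ℤ) * p.2 = t * polygonal m c}

/-- `r'_{m,t}(n)`: the number of pairs `(x,y)` of nonnegative integers with
`2(m-2)n² + t(m-4)² = 2(m-2)x² + t y²`. -/
noncomputable def rmt' (m t n : ℕ) : ℕ :=
  Set.ncard {p : ℕ × ℕ |
    2 * ((m : ℤ) - 2) * (n : ℤ) ^ 2 + t * ((m : ℤ) - 4) ^ 2 =
    2 * ((m : ℤ) - 2) * (p.1 : ℤ) ^ 2 + t * (p.2 : ℤ) ^ 2}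

/-- `d_A(n)`: the number of positive divisors of `n` not divisible by any prime in `A`.
Equivalently, `∏_{p prime, p ∉ A} (1 + ord_p(n))`. -/
def dA (A : Finset ℕ) (n : ℕ) : ℕ :=
  (n.divisors.filter (fun d => ∀ p ∈ A, ¬ p ∣ d)).card

/-!
Since `4ab + 1 = (2c + 1)²` and `(b - a)² + 4ab = n²`, the pairs counted by `r_{3,2}(n)` correspond
to the representations `n² + 1 = s² + k²` with `s = 2c + 1 ≥ 3` odd and `k = b - a ≥ 0`. Together
with the representation `s = 1, k = n`, these are the Gaussian integers `s + k i` of norm `n² + 1`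
with odd real part in the quadrant `re > 0, im ≥ 0`.

The quadrant contains exactly one associate of every nonzero Gaussian integer. If `v` is coprime
to `v̄`, the elements of norm `N(v)` are, up to units, the `ᾱ β` with `v = α β`, and `α ↦ N(α)`
matches the divisors of `v` up to units with the divisors of `N(v)`; so the quadrant contains
`d(N(v))` elements of norm `N(v)`. For even `n` take `v = n + i`: exactly one of the two coordinates
is odd, and swapping them halves the count. For odd `n = 2t + 1` we have `n² + 1 = 2M` with
`M = N(t + 1 + t i)`, multiplication by `1 + i` matches the elements of norm `M` in a rotated
quadrant with those of norm `n² + 1` in the quadrant, and `d(2M) = 2 d(M)`.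
-/

local notation "ℤ[i]" => GaussianInt

lemma Set.ncard_congr_of_rel {α β : Type*} {s : Set α} {t : Set β} (r : α → β → Prop)
    (hst : ∀ a ∈ s, ∃ b ∈ t, r a b) (hts : ∀ b ∈ t, ∃ a ∈ s, r a b)
    (hfun : ∀ a ∈ s, ∀ b ∈ t, ∀ b' ∈ t, r a b → r a b' → b = b')
    (hinj : ∀ a ∈ s, ∀ a' ∈ s, ∀ b, r a b → r a' b → a = a') :
    s.ncard = t.ncard := by
  choose f hft hf using hst
  refine Set.ncard_congr f hft (fun a a' ha ha' h => hinj a ha a' ha' _ (hf a ha) (h ▸ hf a' ha'))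
    fun b hb => ?_
  obtain ⟨a, ha, hab⟩ := hts b hb
  exact ⟨a, ha, hfun a ha _ (hft a ha) _ hb (hf a ha) hab⟩

lemma Int.sq_emod_four (x : ℤ) : x ^ 2 % 4 = x % 2 := by
  rcases Int.even_or_odd' x with ⟨k, rfl | rfl⟩ <;> ring_nf <;> omega

lemma star_dvd_star {R : Type*} [CommSemiring R] [StarRing R] {a b : R} (h : a ∣ b) :
    star a ∣ star b :=
  map_dvd (starRingEnd R) h

lemma Associated.star {R : Type*} [CommRing R] [IsDomain R] [StarRing R] {a b : R}
    (h : Associated a b) : Associated (star a) (star b) :=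
  associated_of_dvd_dvd (star_dvd_star h.dvd) (star_dvd_star h.symm.dvd)

def IsAssociatesTransversal {α : Type*} [MonoidWithZero α] (S : Set α) : Prop :=
  ∀ z : α, z ≠ 0 → ∃! w, w ∈ S ∧ Associated z w

lemma IsAssociatesTransversal.preimage_mul {α : Type*} [CommMonoidWithZero α] [IsCancelMulZero α]
    {S : Set α} (hS : IsAssociatesTransversal S) {c : α} (hc : c ≠ 0) :
    IsAssociatesTransversal {z | z * c ∈ S} := by
  intro z hz
  obtain ⟨w, ⟨hwS, u, rfl⟩, huniq⟩ := hS (z * c) (mul_ne_zero hz hc)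
  refine ⟨z * u, ⟨by rwa [Set.mem_ofPred_eq, mul_right_comm], u, rfl⟩, ?_⟩
  rintro y ⟨hyS, hzy⟩
  have : y * c = z * c * u := huniq _ ⟨hyS, hzy.mul_right c⟩
  exact mul_right_cancel₀ hc (by rw [this, mul_right_comm])

namespace GaussianInt

lemma norm_eq_sq_add_sq (z : ℤ[i]) : z.norm = z.re ^ 2 + z.im ^ 2 := by
  rw [Zsqrtd.norm_def]; ring

lemma mul_star_eq_norm (z : ℤ[i]) : z * star z = z.norm :=
  (Zsqrtd.norm_eq_mul_conj z).symm

lemma norm_dvd_norm {a b : ℤ[i]} (h : a ∣ b) : a.norm ∣ b.norm :=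
  map_dvd Zsqrtd.normMonoidHom h

lemma isUnit_iff_sq_add_sq {u : ℤ[i]} : IsUnit u ↔ u.re ^ 2 + u.im ^ 2 = 1 := by
  rw [← norm_eq_sq_add_sq, Zsqrtd.norm_eq_one_iff' (by norm_num)]

lemma associated_of_dvd_of_norm_eq {a b : ℤ[i]} (hab : a ∣ b) (hb : b ≠ 0)
    (h : a.norm = b.norm) : Associated a b := by
  obtain ⟨c, rfl⟩ := hab
  have hc : c.norm = 1 := by
    rw [Zsqrtd.norm_mul] at h
    exact (mul_eq_left₀ (norm_pos.mpr (left_ne_zero_of_mul hb)).ne').mp h.symm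
  exact associated_mul_unit_right a c ((Zsqrtd.norm_eq_one_iff' (by norm_num) c).mp hc)

lemma finite_setOf_norm_eq (N : ℤ) : {z : ℤ[i] | z.norm = N}.Finite := by
  refine ((Set.finite_Icc (-N) N).prod (Set.finite_Icc (-N) N)).image
    (fun p : ℤ × ℤ => (⟨p.1, p.2⟩ : ℤ[i])) |>.subset fun z hz => ?_
  rw [Set.mem_ofPred_eq, norm_eq_sq_add_sq] at hz
  refine ⟨(z.re, z.im), ⟨⟨?_, ?_⟩, ?_, ?_⟩, rfl⟩ <;> nlinarith [sq_nonneg z.re, sq_nonneg z.im]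

lemma mul_one_add_I (z : ℤ[i]) : z * ⟨1, 1⟩ = ⟨z.re - z.im, z.re + z.im⟩ := by
  ext <;> simp only [Zsqrtd.re_mul, Zsqrtd.im_mul] <;> ring

lemma norm_one_add_I : (⟨1, 1⟩ : ℤ[i]).norm = 2 := rfl

def quadrant : Set ℤ[i] := {z | 0 < z.re ∧ 0 ≤ z.im}

lemma exists_associated_mem_quadrant {z : ℤ[i]} (hz : z ≠ 0) :
    ∃ w ∈ quadrant, Associated z w := by
  have hz' : z.re ≠ 0 ∨ z.im ≠ 0 := by
    contrapose! hz; exact Zsqrtd.ext hz.1 hz.2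
  suffices ∃ u : ℤ[i], IsUnit u ∧ z * u ∈ quadrant from
    let ⟨u, hu, hzu⟩ := this; ⟨z * u, hzu, associated_mul_unit_right z u hu⟩
  have hmul : ∀ u : ℤ[i], z * u ∈ quadrant ↔
      0 < z.re * u.re - z.im * u.im ∧ 0 ≤ z.re * u.im + z.im * u.re := fun u => by
    simp only [quadrant, Set.mem_ofPred_eq, Zsqrtd.re_mul, Zsqrtd.im_mul]; ring_nf
  by_cases h₁ : 0 < z.re ∧ 0 ≤ z.im
  · exact ⟨1, isUnit_one, by simpa [quadrant] using h₁⟩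
  by_cases h₂ : z.re ≤ 0 ∧ 0 < z.im
  · exact ⟨⟨0, -1⟩, isUnit_iff_sq_add_sq.mpr rfl, (hmul _).mpr (by dsimp only; omega)⟩
  by_cases h₃ : z.re < 0 ∧ z.im ≤ 0
  · exact ⟨⟨-1, 0⟩, isUnit_iff_sq_add_sq.mpr rfl, (hmul _).mpr (by dsimp only; omega)⟩
  · exact ⟨⟨0, 1⟩, isUnit_iff_sq_add_sq.mpr rfl, (hmul _).mpr (by dsimp only; omega)⟩

lemma eq_one_of_mem_quadrant_of_mul_mem_quadrant {w u : ℤ[i]} (hu : IsUnit u)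
    (hw : w ∈ quadrant) (hwu : w * u ∈ quadrant) : u = 1 := by
  have hu := isUnit_iff_sq_add_sq.mp hu
  obtain ⟨a, b⟩ := u
  simp only [quadrant, Set.mem_ofPred_eq, Zsqrtd.re_mul, Zsqrtd.im_mul] at hw hwu hu
  have ha : -1 ≤ a ∧ a ≤ 1 := by constructor <;> nlinarith
  have hb : -1 ≤ b ∧ b ≤ 1 := by constructor <;> nlinarith
  obtain ⟨ha₁, ha₂⟩ := ha
  obtain ⟨hb₁, hb₂⟩ := hb
  interval_cases a <;> interval_cases b <;> first | rfl | omega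

lemma isAssociatesTransversal_quadrant : IsAssociatesTransversal quadrant := by
  intro z hz
  obtain ⟨w, hw, hzw⟩ := exists_associated_mem_quadrant hz
  refine ⟨w, ⟨hw, hzw⟩, ?_⟩
  rintro w' ⟨hw', hzw'⟩
  obtain ⟨u, rfl⟩ := hzw.symm.trans hzw'
  rw [eq_one_of_mem_quadrant_of_mul_mem_quadrant u.isUnit hw hw', mul_one]

lemma isCoprime_star_of_isCoprime_re_im {v : ℤ[i]} (hv : IsCoprime v.re v.im)
    (hodd : Odd v.norm) : IsCoprime v (star v) := by
  obtain ⟨a, b, hab⟩ := hv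
  obtain ⟨q, hq⟩ := hodd
  rw [norm_eq_sq_add_sq] at hq
  -- `1 = v v̄ - 2q (a re + b im)`, where `2 re = v + v̄` and `2 im = -i (v - v̄)`.
  refine ⟨⟨v.re - q * a, -v.im + q * b⟩, ⟨-(q * a), -(q * b)⟩, ?_⟩
  ext <;> simp only [Zsqrtd.re_add, Zsqrtd.im_add, Zsqrtd.re_mul, Zsqrtd.im_mul, Zsqrtd.re_star,
    Zsqrtd.im_star, Zsqrtd.re_one, Zsqrtd.im_one]
  · linear_combination hq - 2 * q * hab
  · ring

section CoprimeConj

variable {v : ℤ[i]} (hv : IsCoprime v (star v))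
include hv

lemma isCoprime_of_dvd_of_dvd_star {α β : ℤ[i]} (hα : α ∣ v) (hβ : β ∣ star v) :
    IsCoprime α β :=
  (hv.of_isCoprime_of_dvd_left hα).of_isCoprime_of_dvd_right hβ

lemma ne_zero_of_isCoprime_star : v ≠ 0 := by
  rintro rfl
  rw [star_zero, isCoprime_zero_left] at hv
  exact not_isUnit_zero hv

lemma associated_of_dvd_of_dvd_of_norm_eq {α α' : ℤ[i]} (hα : α ∣ v) (hα' : α' ∣ v)
    (h : α.norm = α'.norm) : Associated α α' := by
  have key : ∀ {a b : ℤ[i]}, a ∣ v → b ∣ v → a.norm = b.norm → a ∣ b := fun ha hb hab =>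
    (isCoprime_of_dvd_of_dvd_star hv ha (star_dvd_star hb)).dvd_of_dvd_mul_right <| by
      rw [mul_star_eq_norm, ← hab, ← mul_star_eq_norm]; exact dvd_mul_right _ _
  exact associated_of_dvd_dvd (key hα hα' h) (key hα' hα h.symm)

lemma exists_dvd_norm_eq {d : ℕ} (hd : (d : ℤ) ∣ v.norm) : ∃ α, α ∣ v ∧ α.norm = d := by
  have hd' : (d : ℤ[i]) ∣ v * star v := by
    rw [mul_star_eq_norm]; simpa using map_dvd (Int.castRingHom ℤ[i]) hd
  obtain ⟨α, β, hα, hβ, hαβ⟩ := exists_dvd_and_dvd_of_dvd_mul hd'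
  -- `d = α β` is fixed by conjugation, so `α ∣ β̄` and `β ∣ ᾱ` by coprimality: `N α = N β`.
  have hstar : star α * star β = α * β := by
    rw [← hαβ, ← star_natCast (R := ℤ[i]) d, hαβ, star_mul, mul_comm]
  have hαβ' : α ∣ star β :=
    (isCoprime_of_dvd_of_dvd_star hv hα (star_dvd_star hα)).dvd_of_dvd_mul_left
      (hstar ▸ dvd_mul_right α β)
  have hβα : β ∣ star α :=
    (isCoprime_of_dvd_of_dvd_star hv (by simpa using star_dvd_star hβ) hβ).symm.dvd_of_dvd_mul_right
      (hstar ▸ dvd_mul_left β α)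
  have hnorm : α.norm = β.norm := by
    refine Int.dvd_antisymm (norm_nonneg _) (norm_nonneg _) ?_ ?_
    · simpa [Zsqrtd.norm_conj] using norm_dvd_norm hαβ'
    · simpa [Zsqrtd.norm_conj] using norm_dvd_norm hβα
  have hsq : (d : ℤ) * d = α.norm * α.norm := by
    rw [← Zsqrtd.norm_natCast, hαβ, Zsqrtd.norm_mul, hnorm]
  refine ⟨α, hα, ?_⟩
  nlinarith [norm_nonneg α]

lemma associated_of_associated_star_mul {α β α' β' : ℤ[i]} (h : α * β = v) (h' : α' * β' = v)
    (hz : Associated (star α * β) (star α' * β')) : Associated α α' := by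
  have key : ∀ {a b a' b' : ℤ[i]}, a * b = v → a' * b' = v →
      Associated (star a * b) (star a' * b') → a ∣ a' := by
    intro a b a' b' hab hab' hz
    have hcop : IsCoprime (star a) b' :=
      (isCoprime_of_dvd_of_dvd_star hv (Dvd.intro_left _ hab')
        (star_dvd_star (Dvd.intro _ hab))).symm
    simpa using star_dvd_star (hcop.dvd_of_dvd_mul_right ((dvd_mul_right _ _).trans hz.dvd))
  exact associated_of_dvd_dvd (key h h' hz) (key h' h hz.symm)

lemma exists_associated_star_mul {z : ℤ[i]} (hz : z.norm = v.norm) :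
    ∃ α β, α * β = v ∧ Associated z (star α * β) := by
  have hzv : z * star z = v * star v := by rw [mul_star_eq_norm, mul_star_eq_norm, hz]
  obtain ⟨β, γ, hβ, hγ, rfl⟩ := exists_dvd_and_dvd_of_dvd_mul (hzv ▸ dvd_mul_right _ (star z))
  obtain ⟨α, hα⟩ := hβ
  have hv0 := ne_zero_of_isCoprime_star hv
  have hβ0 : β * star β ≠ 0 := by
    rw [mul_star_eq_norm, Int.cast_ne_zero, Ne, norm_eq_zero]
    rintro rfl
    exact hv0 (by rw [hα, zero_mul])
  have hγγ : γ * star γ = α * star α := by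
    refine mul_left_cancel₀ hβ0 ?_
    calc β * star β * (γ * star γ) = β * γ * star (β * γ) := by rw [star_mul]; ring
      _ = v * star v := hzv
      _ = _ := by rw [hα, star_mul]; ring
  have hαγ : star α ∣ γ :=
    (isCoprime_of_dvd_of_dvd_star hv (by simpa using star_dvd_star hγ)
      (star_dvd_star (Dvd.intro_left β hα.symm))).symm.dvd_of_dvd_mul_right
      (by rw [hγγ]; exact dvd_mul_left _ _)
  have hγ0 : γ ≠ 0 := by
    rintro rfl
    simp only [mul_zero, star_zero, zero_eq_mul, star_eq_zero, or_self] at hzv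
    exact hv0 hzv
  have hnorm : (star α).norm = γ.norm := by
    rw [Zsqrtd.norm_conj]
    exact_mod_cast (by rw [← mul_star_eq_norm, ← mul_star_eq_norm, hγγ] : (α.norm : ℤ[i]) = γ.norm)
  refine ⟨α, β, by rw [hα, mul_comm], ?_⟩
  rw [mul_comm (star α)]
  exact ((associated_of_dvd_of_norm_eq hαγ hγ0 hnorm).mul_left β).symm

theorem ncard_norm_eq_of_isCoprime_star {S : Set ℤ[i]} (hS : IsAssociatesTransversal S) {M : ℕ}
    (hvM : v.norm = M) : {z ∈ S | z.norm = M}.ncard = M.divisors.card := by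
  have hv0 := ne_zero_of_isCoprime_star hv
  have hM : M ≠ 0 := by have := norm_pos.mpr hv0; omega
  rw [← Set.ncard_coe_finset]
  refine Set.ncard_congr_of_rel
    (fun z (d : ℕ) => ∃ α β, α * β = v ∧ Associated z (star α * β) ∧ α.norm = d) ?_ ?_ ?_ ?_
  · rintro z ⟨-, hz⟩
    obtain ⟨α, β, hαβ, hzαβ⟩ := exists_associated_star_mul hv (hz.trans hvM.symm)
    refine ⟨α.norm.natAbs, ?_, α, β, hαβ, hzαβ, (abs_natCast_norm α).symm⟩
    rw [Finset.mem_coe, Nat.mem_divisors]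
    refine ⟨?_, hM⟩
    simpa [hvM] using Int.natAbs_dvd_natAbs.mpr (norm_dvd_norm (Dvd.intro β hαβ))
  · intro d hd
    rw [Finset.mem_coe, Nat.mem_divisors] at hd
    obtain ⟨α, ⟨β, hαβ⟩, hαd⟩ := exists_dvd_norm_eq hv (hvM ▸ Int.natCast_dvd_natCast.mpr hd.1)
    have hne : star α * β ≠ 0 := by
      rw [hαβ] at hv0
      exact mul_ne_zero (by simpa using left_ne_zero_of_mul hv0) (right_ne_zero_of_mul hv0)
    obtain ⟨w, ⟨hwS, hw⟩, -⟩ := hS _ hne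
    refine ⟨w, ⟨hwS, ?_⟩, α, β, hαβ.symm, hw.symm, hαd⟩
    rw [← Zsqrtd.norm_eq_of_associated (by norm_num) hw, Zsqrtd.norm_mul, Zsqrtd.norm_conj,
      ← Zsqrtd.norm_mul, ← hαβ, hvM]
  · rintro z - d - d' - ⟨α, β, hαβ, hz, hd⟩ ⟨α', β', hαβ', hz', hd'⟩
    have := associated_of_associated_star_mul hv hαβ hαβ' (hz.symm.trans hz')
    exact_mod_cast hd.symm.trans ((Zsqrtd.norm_eq_of_associated (by norm_num) this).trans hd')
  · rintro z ⟨hzS, hz⟩ z' ⟨hz'S, -⟩ d ⟨α, β, hαβ, hzαβ, hd⟩ ⟨α', β', hαβ', hzαβ', hd'⟩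
    have hα := associated_of_dvd_of_dvd_of_norm_eq hv (Dvd.intro β hαβ) (Dvd.intro β' hαβ')
      (hd.trans hd'.symm)
    have hβ : Associated β β' :=
      (show Associated (α * β) (α' * β') by rw [hαβ, hαβ']).of_mul_left hα
        (left_ne_zero_of_mul (by rwa [hαβ]))
    have hz0 : z ≠ 0 := by rintro rfl; simp [eq_comm, hM] at hz
    exact (hS z hz0).unique ⟨hzS, Associated.refl z⟩
      ⟨hz'S, hzαβ.trans ((hα.star.mul_mul hβ).trans hzαβ'.symm)⟩

end CoprimeConj

end GaussianInt

open GaussianInt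

def triangularPairs (n : ℕ) : Set (ℕ × ℕ) :=
  {p | 0 < p.1 ∧ p.1 ≤ p.2 ∧ p.1 + p.2 = n ∧ ∃ c : ℤ, 0 < c ∧ (p.1 : ℤ) * p.2 = c * (c + 1)}

lemma two_mul_polygonal_three (c : ℤ) : 2 * polygonal 3 c = c * (c + 1) := by
  have : 2 ∣ c * (c + 1) := (Int.even_mul_succ_self c).two_dvd
  rw [polygonal, show ((3 : ℤ) - 2) * c - (3 - 4) = c + 1 by ring]
  omega

lemma rmt_three_two (n : ℕ) : rmt 3 2 n = (triangularPairs n).ncard := by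
  simp only [rmt, triangularPairs, Nat.cast_ofNat, two_mul_polygonal_three, true_or,
    forall_const]

lemma exists_mem_triangularPairs {n : ℕ} {z : ℤ[i]} (hz : z ∈ quadrant)
    (hN : z.norm = (n ^ 2 + 1 : ℕ)) (hodd : Odd z.re) (hz1 : z ≠ ⟨1, n⟩) :
    ∃ p ∈ triangularPairs n, z.im = p.2 - p.1 ∧ z.re ^ 2 = 4 * p.1 * p.2 + 1 := by
  obtain ⟨hre, him⟩ := hz
  obtain ⟨c, hc⟩ := hodd
  rw [norm_eq_sq_add_sq] at hN
  push_cast at hN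
  have hpar : z.im % 2 = (n : ℤ) % 2 := by
    have := Int.sq_emod_four z.re
    have := Int.sq_emod_four z.im
    have := Int.sq_emod_four n
    omega
  have hc0 : 0 < c := by
    by_contra! h
    have hre1 : z.re = 1 := by omega
    have himn : z.im = n := by nlinarith
    exact hz1 (Zsqrtd.ext hre1 himn)
  have himn : z.im < n := by nlinarith
  obtain ⟨a, ha⟩ : ∃ a : ℕ, (a : ℤ) = (n - z.im) / 2 := ⟨_, Int.toNat_of_nonneg (by omega)⟩
  obtain ⟨b, hb⟩ : ∃ b : ℕ, (b : ℤ) = (n + z.im) / 2 := ⟨_, Int.toNat_of_nonneg (by omega)⟩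
  have hab : (2 * a : ℤ) * (2 * b) = z.re ^ 2 - 1 := by
    rw [show (2 * a : ℤ) = n - z.im by omega, show (2 * b : ℤ) = n + z.im by omega]
    linear_combination -hN
  refine ⟨(a, b), ⟨by omega, by omega, by omega, c, hc0, ?_⟩, by dsimp only; omega, ?_⟩
  · have : (4 : ℤ) * (a * b) = 4 * (c * (c + 1)) := by
      linear_combination hab + (z.re + 2 * c + 1) * hc
    exact mul_left_cancel₀ four_ne_zero this
  · dsimp only; linear_combination -hab

lemma ncard_triangularPairs_add_one (n : ℕ) :
    (triangularPairs n).ncard + 1 =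
      {z ∈ quadrant | z.norm = (n ^ 2 + 1 : ℕ) ∧ Odd z.re}.ncard := by
  have hmem : (⟨1, n⟩ : ℤ[i]) ∈ {z ∈ quadrant | z.norm = (n ^ 2 + 1 : ℕ) ∧ Odd z.re} :=
    ⟨⟨one_pos, n.cast_nonneg⟩, by rw [norm_eq_sq_add_sq]; push_cast; ring, odd_one⟩
  rw [← Set.ncard_sdiff_singleton_add_one hmem
    ((finite_setOf_norm_eq _).subset fun z hz => hz.2.1)]
  congr 1
  refine Set.ncard_congr_of_rel
    (fun p z => z.im = p.2 - p.1 ∧ z.re ^ 2 = 4 * p.1 * p.2 + 1) ?_ ?_ ?_ ?_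
  · rintro ⟨a, b⟩ ⟨ha, hab, rfl, c, hc, habc⟩
    dsimp only at ha hab habc ⊢
    refine ⟨⟨2 * c + 1, b - a⟩, ⟨⟨⟨?_, ?_⟩, ?_, c, rfl⟩, ?_⟩, rfl, ?_⟩
    · change 0 < 2 * c + 1; omega
    · change (0 : ℤ) ≤ b - a; omega
    · rw [norm_eq_sq_add_sq]; push_cast; linear_combination -4 * habc
    · simp only [Set.mem_singleton_iff, Zsqrtd.ext_iff]; omega
    · change (2 * c + 1) ^ 2 = 4 * a * b + 1; linear_combination -4 * habc
  · rintro z ⟨⟨hz, hN, hodd⟩, hz1⟩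
    exact exists_mem_triangularPairs hz hN hodd hz1
  · rintro p - z ⟨⟨⟨hre, -⟩, -⟩, -⟩ z' ⟨⟨⟨hre', -⟩, -⟩, -⟩ ⟨him, hsq⟩ ⟨him', hsq'⟩
    exact Zsqrtd.ext (by nlinarith) (him.trans him'.symm)
  · rintro ⟨a, b⟩ ⟨-, -, hab, -⟩ ⟨a', b'⟩ ⟨-, -, hab', -⟩ z ⟨him, -⟩ ⟨him', -⟩
    simp only at hab hab' him him' ⊢
    ext <;> omega

lemma re_emod_two_add_im_emod_two_of_even {n : ℕ} (he : Even n) {z : ℤ[i]}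
    (hz : z.norm = (n ^ 2 + 1 : ℕ)) : z.re % 2 + z.im % 2 = 1 := by
  obtain ⟨k, rfl⟩ := he
  rw [norm_eq_sq_add_sq] at hz
  push_cast at hz
  have := Int.sq_emod_four z.re
  have := Int.sq_emod_four z.im
  have := Int.sq_emod_four ((k : ℤ) + k)
  omega

lemma ncard_odd_re_eq_ncard_even_re {n : ℕ} (hn : 0 < n) (he : Even n) :
    {z ∈ quadrant | z.norm = (n ^ 2 + 1 : ℕ) ∧ Odd z.re}.ncard =
      {z ∈ quadrant | z.norm = (n ^ 2 + 1 : ℕ) ∧ Even z.re}.ncard := by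
  refine Set.ncard_congr (fun z _ => ⟨z.im, z.re⟩) ?_ ?_ ?_
  · rintro z ⟨⟨hre, him⟩, hN, hodd⟩
    have hpar := re_emod_two_add_im_emod_two_of_even he hN
    have him0 : z.im ≠ 0 := by
      intro h0
      rw [norm_eq_sq_add_sq, h0] at hN
      push_cast at hN
      rcases le_or_gt z.re n with h | h <;> nlinarith
    rw [Int.odd_iff] at hodd
    refine ⟨⟨?_, hre.le⟩, ?_, Int.even_iff.mpr ?_⟩
    · change 0 < z.im; omega
    · rw [norm_eq_sq_add_sq] at hN ⊢; change z.im ^ 2 + z.re ^ 2 = _; linarith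
    · change z.im % 2 = 0; omega
  · intro z z' _ _ h
    simp only [Zsqrtd.ext_iff] at h ⊢
    exact ⟨h.2, h.1⟩
  · rintro w ⟨⟨hre, him⟩, hN, heven⟩
    have hpar := re_emod_two_add_im_emod_two_of_even he hN
    rw [Int.even_iff] at heven
    refine ⟨⟨w.im, w.re⟩, ⟨⟨?_, hre.le⟩, ?_, Int.odd_iff.mpr ?_⟩, rfl⟩
    · change 0 < w.im; omega
    · rw [norm_eq_sq_add_sq] at hN ⊢; change w.im ^ 2 + w.re ^ 2 = _; linarith
    · change w.im % 2 = 1; omega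

lemma ncard_quadrant_norm_eq_of_even {n : ℕ} (hn : 0 < n) (he : Even n) :
    {z ∈ quadrant | z.norm = (n ^ 2 + 1 : ℕ)}.ncard =
      2 * {z ∈ quadrant | z.norm = (n ^ 2 + 1 : ℕ) ∧ Odd z.re}.ncard := by
  have hfin : ∀ s ⊆ {z : ℤ[i] | z.norm = (n ^ 2 + 1 : ℕ)}, s.Finite :=
    fun s hs => (finite_setOf_norm_eq _).subset hs
  have hsplit : {z ∈ quadrant | z.norm = (n ^ 2 + 1 : ℕ)} =
      {z ∈ quadrant | z.norm = (n ^ 2 + 1 : ℕ) ∧ Odd z.re} ∪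
        {z ∈ quadrant | z.norm = (n ^ 2 + 1 : ℕ) ∧ Even z.re} := by
    ext z
    simp only [Set.mem_union, Set.mem_ofPred_eq, ← and_or_left, (Int.even_or_odd z.re).symm,
      and_true]
  have hdisj : Disjoint {z ∈ quadrant | z.norm = (n ^ 2 + 1 : ℕ) ∧ Odd z.re}
      {z ∈ quadrant | z.norm = (n ^ 2 + 1 : ℕ) ∧ Even z.re} :=
    Set.disjoint_left.mpr fun z hA hB => Int.not_even_iff_odd.mpr hA.2.2 hB.2.2
  rw [hsplit, Set.ncard_union_eq hdisj (hfin _ fun z hz => hz.2.1) (hfin _ fun z hz => hz.2.1),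
    ← ncard_odd_re_eq_ncard_even_re hn he, two_mul]

lemma ncard_odd_re_eq_of_sq_add_one_eq_two_mul {n M : ℕ} (hM : n ^ 2 + 1 = 2 * M) :
    {z ∈ quadrant | z.norm = (n ^ 2 + 1 : ℕ) ∧ Odd z.re}.ncard =
      {z ∈ {z : ℤ[i] | z * ⟨1, 1⟩ ∈ quadrant} | z.norm = M}.ncard := by
  have hM' : (n : ℤ) ^ 2 + 1 = 2 * M := by exact_mod_cast hM
  have hn := Int.sq_emod_four n
  symm
  refine Set.ncard_congr (fun z _ => z * ⟨1, 1⟩) ?_ ?_ ?_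
  · rintro z ⟨hz, hN⟩
    refine ⟨hz, ?_, ?_⟩
    · rw [Zsqrtd.norm_mul, hN, hM, norm_one_add_I]; push_cast; ring
    · rw [norm_eq_sq_add_sq] at hN
      have := Int.sq_emod_four z.re
      have := Int.sq_emod_four z.im
      rw [mul_one_add_I, Int.odd_iff]
      change (z.re - z.im) % 2 = 1
      omega
  · intro z z' _ _ h
    exact mul_right_cancel₀ (by decide) h
  · rintro w ⟨hw, hN, hodd⟩
    rw [norm_eq_sq_add_sq] at hN
    push_cast at hN
    have := Int.sq_emod_four w.re
    have := Int.sq_emod_four w.im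
    rw [Int.odd_iff] at hodd
    have hw' : (⟨(w.re + w.im) / 2, (w.im - w.re) / 2⟩ : ℤ[i]) * ⟨1, 1⟩ = w := by
      rw [mul_one_add_I]; ext <;> dsimp only <;> omega
    refine ⟨_, ⟨by rwa [Set.mem_ofPred_eq, hw'], ?_⟩, hw'⟩
    have h2 := congrArg Zsqrtd.norm hw'
    rw [Zsqrtd.norm_mul, norm_eq_sq_add_sq w, hN, hM', norm_one_add_I] at h2
    linarith

lemma card_divisors_sq_add_one_of_even {n : ℕ} (hn : 0 < n) (he : Even n) :
    (n ^ 2 + 1).divisors.card =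
      2 * {z ∈ quadrant | z.norm = (n ^ 2 + 1 : ℕ) ∧ Odd z.re}.ncard := by
  have hv : (⟨n, 1⟩ : ℤ[i]).norm = (n ^ 2 + 1 : ℕ) := by
    rw [norm_eq_sq_add_sq]; push_cast; ring
  have hodd : Odd (⟨n, 1⟩ : ℤ[i]).norm := by
    obtain ⟨k, rfl⟩ := he
    exact hv ▸ ⟨2 * k * k, by push_cast; ring⟩
  rw [← ncard_quadrant_norm_eq_of_even hn he,
    ncard_norm_eq_of_isCoprime_star (isCoprime_star_of_isCoprime_re_im isCoprime_one_right hodd)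
      isAssociatesTransversal_quadrant hv]

lemma card_divisors_sq_add_one_of_odd {n : ℕ} (ho : Odd n) :
    (n ^ 2 + 1).divisors.card =
      2 * {z ∈ quadrant | z.norm = (n ^ 2 + 1 : ℕ) ∧ Odd z.re}.ncard := by
  obtain ⟨t, rfl⟩ := ho
  have hM : (2 * t + 1) ^ 2 + 1 = 2 * (t ^ 2 + (t + 1) ^ 2) := by ring
  have hv : (⟨t + 1, t⟩ : ℤ[i]).norm = (t ^ 2 + (t + 1) ^ 2 : ℕ) := by
    rw [norm_eq_sq_add_sq]; push_cast; ring
  have hcop : IsCoprime (⟨t + 1, t⟩ : ℤ[i]) (star ⟨t + 1, t⟩) :=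
    isCoprime_star_of_isCoprime_re_im ⟨1, -1, by ring⟩ (hv ▸ ⟨t * t + t, by push_cast; ring⟩)
  rw [ncard_odd_re_eq_of_sq_add_one_eq_two_mul hM, ncard_norm_eq_of_isCoprime_star hcop
    (isAssociatesTransversal_quadrant.preimage_mul (by decide)) hv, hM,
    Nat.Coprime.card_divisors_mul (Nat.coprime_two_left.mpr ⟨t * t + t, by ring⟩),
    Nat.prime_two.divisors, Finset.card_pair (by decide : (1 : ℕ) ≠ 2)]

theorem stmt_9 (n : ℕ) (hn : 0 < n) :
    rmt 3 2 n = (n ^ 2 + 1).divisors.card / 2 - 1 := by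
  have h := (Nat.even_or_odd n).elim (card_divisors_sq_add_one_of_even hn)
    card_divisors_sq_add_one_of_odd
  rw [← ncard_triangularPairs_add_one] at h
  rw [rmt_three_two, h]
  omega
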